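/- arXiv:1604.04090 — 2 statements merged into one kernel-verified Lean document; each statement's English description precedes it below -/
import Mathlib

section
/- Let (A♮_R B, α⊗β, σ) be a cobraided R-smash product Hom-Hopf algebra, and define τ(a,a')=σ(a⊗1_B, a'⊗1_B), υ(b,b')=σ(1_A⊗b, 1_A⊗b'), φ(a,b)=σ(a⊗1_B, 1_A⊗b), ψ(b,a)=σ(1_A⊗b, a⊗1_B). Then σ(α(a)⊗β(b), α(a')⊗β(b')) = φ(a₁,b'₁)τ(a₂,a'₁)υ(b₁,b'₂)ψ(b₂,a'₂). -/
open TensorProduct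

noncomputable section

namespace HomPaper

variable (K : Type) [Field K]
variable {A B C D H M : Type}
variable [AddCommGroup A] [Module K A] [AddCommGroup B] [Module K B]
variable [AddCommGroup C] [Module K C] [AddCommGroup D] [Module K D]
variable [AddCommGroup H] [Module K H] [AddCommGroup M] [Module K M]

/-- `pairT f g t` pairs a tensor `t = Σ x ⊗ y` against two functionals: `Σ f x * g y`. -/
def pairT (f : A →ₗ[K] K) (g : B →ₗ[K] K) : A ⊗[K] B →ₗ[K] K :=
  (TensorProduct.lid K K).toLinearMap ∘ₗ TensorProduct.map f g

/-- `contract4 p q` sends `(a ⊗ b, c ⊗ d)` to `p a c * q b d` (with implicit summation). -/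
def contract4 (p : A →ₗ[K] C →ₗ[K] K) (q : B →ₗ[K] D →ₗ[K] K) :
    A ⊗[K] B →ₗ[K] C ⊗[K] D →ₗ[K] K :=
  TensorProduct.curry ((TensorProduct.lid K K).toLinearMap ∘ₗ
    TensorProduct.map (TensorProduct.lift p) (TensorProduct.lift q) ∘ₗ
    (TensorProduct.tensorTensorTensorComm K A B C D).toLinearMap)

/-- componentwise multiplication on a tensor product of two algebras:
`(a ⊗ b)(a' ⊗ b') = aa' ⊗ bb'`. -/
def tmul2 (mA : A →ₗ[K] A →ₗ[K] A) (mB : B →ₗ[K] B →ₗ[K] B) :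
    A ⊗[K] B →ₗ[K] A ⊗[K] B →ₗ[K] A ⊗[K] B :=
  TensorProduct.curry ((TensorProduct.map (TensorProduct.lift mA) (TensorProduct.lift mB)) ∘ₗ
    (TensorProduct.tensorTensorTensorComm K A B A B).toLinearMap)

/-- the tensor product comultiplication `Δ(c ⊗ d) = (c₁ ⊗ d₁) ⊗ (c₂ ⊗ d₂)`. -/
def tcomul (dA : A →ₗ[K] A ⊗[K] A) (dB : B →ₗ[K] B ⊗[K] B) :
    A ⊗[K] B →ₗ[K] (A ⊗[K] B) ⊗[K] (A ⊗[K] B) :=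
  (TensorProduct.tensorTensorTensorComm K A A B B).toLinearMap ∘ₗ TensorProduct.map dA dB

/-- the tensor product counit `ε(c ⊗ d) = ε(c)ε(d)`. -/
def tcounit (eA : A →ₗ[K] K) (eB : B →ₗ[K] K) : A ⊗[K] B →ₗ[K] K := pairT K eA eB

/-- The `R`-smash product multiplication
`(a ⊗ b)(a' ⊗ b') = a·α⁻¹(a')_R ⊗ β⁻¹(b_R)·b'`, where `R(b ⊗ a) = a_R ⊗ b_R`. -/
def smashMul (mA : A →ₗ[K] A →ₗ[K] A) (mB : B →ₗ[K] B →ₗ[K] B)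
    (α : A ≃ₗ[K] A) (β : B ≃ₗ[K] B) (R : B ⊗[K] A →ₗ[K] A ⊗[K] B) :
    A ⊗[K] B →ₗ[K] A ⊗[K] B →ₗ[K] A ⊗[K] B :=
  TensorProduct.curry
    ((TensorProduct.map (TensorProduct.lift mA) (TensorProduct.lift mB)) ∘ₗ
     (TensorProduct.assoc K A A (B ⊗[K] B)).symm.toLinearMap ∘ₗ
     (TensorProduct.map LinearMap.id (TensorProduct.assoc K A B B).toLinearMap) ∘ₗ
     (TensorProduct.map LinearMap.id (TensorProduct.map
        ((TensorProduct.map LinearMap.id β.symm.toLinearMap) ∘ₗ R ∘ₗ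
         (TensorProduct.map LinearMap.id α.symm.toLinearMap)) LinearMap.id)) ∘ₗ
     (TensorProduct.map LinearMap.id (TensorProduct.assoc K B A B).symm.toLinearMap) ∘ₗ
     (TensorProduct.assoc K A B (A ⊗[K] B)).toLinearMap)

/-- The antipode of the `R`-smash product:
`S̄(a ⊗ b) = α⁻¹(S_A(a))_R ⊗ β⁻¹(S_B(b)_R)`. -/
def smashS (α : A ≃ₗ[K] A) (β : B ≃ₗ[K] B) (SA : A →ₗ[K] A) (SB : B →ₗ[K] B)
    (R : B ⊗[K] A →ₗ[K] A ⊗[K] B) : A ⊗[K] B →ₗ[K] A ⊗[K] B :=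
  (TensorProduct.map LinearMap.id β.symm.toLinearMap) ∘ₗ R ∘ₗ
  (TensorProduct.map SB (α.symm.toLinearMap ∘ₗ SA)) ∘ₗ (TensorProduct.comm K A B).toLinearMap

/-- the twisting condition (4): `R(β(b) ⊗ α(a)) = (α ⊗ β)(R(b ⊗ a))`. -/
def RTwist (α : A ≃ₗ[K] A) (β : B ≃ₗ[K] B) (R : B ⊗[K] A →ₗ[K] A ⊗[K] B) : Prop :=
  ∀ (a : A) (b : B),
    R (β b ⊗ₜ[K] α a) = TensorProduct.map α.toLinearMap β.toLinearMap (R (b ⊗ₜ[K] a))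

/-- condition (C1): `a_R ⊗ (1_B)_R = α(a) ⊗ 1_B` and `(1_A)_R ⊗ b_R = 1_A ⊗ β(b)`. -/
def RC1 (oneA : A) (oneB : B) (α : A ≃ₗ[K] A) (β : B ≃ₗ[K] B)
    (R : B ⊗[K] A →ₗ[K] A ⊗[K] B) : Prop :=
  (∀ a : A, R (oneB ⊗ₜ[K] a) = α a ⊗ₜ[K] oneB) ∧
  (∀ b : B, R (b ⊗ₜ[K] oneA) = oneA ⊗ₜ[K] β b)

/-- condition (C2): `α(a)_R ⊗ (bb')_R = a_{Rr} ⊗ β⁻¹(β(b)_r)b'_R`. -/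
def RC2 (mB : B →ₗ[K] B →ₗ[K] B) (α : A ≃ₗ[K] A) (β : B ≃ₗ[K] B)
    (R : B ⊗[K] A →ₗ[K] A ⊗[K] B) : Prop :=
  ∀ (a : A) (b b' : B),
    R (mB b b' ⊗ₜ[K] α a) =
      ((TensorProduct.map LinearMap.id (TensorProduct.lift mB)) ∘ₗ
       (TensorProduct.assoc K A B B).toLinearMap ∘ₗ
       (TensorProduct.map (TensorProduct.map LinearMap.id β.symm.toLinearMap) LinearMap.id) ∘ₗ
       (TensorProduct.map (R ∘ₗ TensorProduct.mk K B A (β b)) LinearMap.id))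
        (R (b' ⊗ₜ[K] a))

/-- condition (C3): `α((aa')_R) ⊗ β(b)_R = α(a_R)·α(a')_r ⊗ b_{Rr}`. -/
def RC3 (mA : A →ₗ[K] A →ₗ[K] A) (α : A ≃ₗ[K] A) (β : B ≃ₗ[K] B)
    (R : B ⊗[K] A →ₗ[K] A ⊗[K] B) : Prop :=
  ∀ (a a' : A) (b : B),
    TensorProduct.map α.toLinearMap LinearMap.id (R (β b ⊗ₜ[K] mA a a')) =
      ((TensorProduct.map (TensorProduct.lift mA) LinearMap.id) ∘ₗ
       (TensorProduct.assoc K A A B).symm.toLinearMap ∘ₗ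
       (TensorProduct.map α.toLinearMap (R ∘ₗ (TensorProduct.mk K B A).flip (α a'))))
        (R (b ⊗ₜ[K] a))

/-- A Hom-algebra: `α` multiplicative and unital, Hom-associativity, Hom-unitality. -/
structure IsHomAlgebra (mul : A →ₗ[K] A →ₗ[K] A) (one : A) (α : A ≃ₗ[K] A) : Prop where
  map_mul : ∀ a b : A, α (mul a b) = mul (α a) (α b)
  map_one : α one = one
  hom_assoc : ∀ a b c : A, mul (α a) (mul b c) = mul (mul a b) (α c)
  mul_one : ∀ a : A, mul a one = α a
  one_mul : ∀ a : A, mul one a = α a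

/-- A Hom-coalgebra: `Δ∘α = (α⊗α)∘Δ`, `ε∘α = ε`, Hom-coassociativity
`α(c₁) ⊗ c₂₁ ⊗ c₂₂ = c₁₁ ⊗ c₁₂ ⊗ α(c₂)`, and counit identities `ε(c₁)c₂ = c₁ε(c₂) = α(c)`. -/
structure IsHomCoalgebra (comul : C →ₗ[K] C ⊗[K] C) (counit : C →ₗ[K] K)
    (α : C ≃ₗ[K] C) : Prop where
  comul_map : ∀ c : C,
    comul (α c) = TensorProduct.map α.toLinearMap α.toLinearMap (comul c)
  counit_map : ∀ c : C, counit (α c) = counit c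
  hom_coassoc : ∀ c : C,
    TensorProduct.map α.toLinearMap comul (comul c) =
      (TensorProduct.assoc K C C C) (TensorProduct.map comul α.toLinearMap (comul c))
  counit_left : ∀ c : C,
    TensorProduct.lid K C (TensorProduct.map counit LinearMap.id (comul c)) = α c
  counit_right : ∀ c : C,
    TensorProduct.rid K C (TensorProduct.map LinearMap.id counit (comul c)) = α c

/-- A Hom-bialgebra: simultaneously a Hom-algebra and Hom-coalgebra such that
`Δ` and `ε` are morphisms of Hom-algebras. -/
structure IsHomBialgebra (mul : H →ₗ[K] H →ₗ[K] H) (one : H)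
    (comul : H →ₗ[K] H ⊗[K] H) (counit : H →ₗ[K] K) (β : H ≃ₗ[K] H) : Prop where
  alg : IsHomAlgebra K mul one β
  coalg : IsHomCoalgebra K comul counit β
  comul_mul : ∀ a b : H, comul (mul a b) = tmul2 K mul mul (comul a) (comul b)
  comul_one : comul one = one ⊗ₜ[K] one
  counit_mul : ∀ a b : H, counit (mul a b) = counit a * counit b
  counit_one : counit one = 1

/-- A Hom-Hopf algebra: a Hom-bialgebra with antipode `S`:
`S(h₁)h₂ = h₁S(h₂) = ε(h)1` and `S∘β = β∘S`. -/
structure IsHomHopf (mul : H →ₗ[K] H →ₗ[K] H) (one : H)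
    (comul : H →ₗ[K] H ⊗[K] H) (counit : H →ₗ[K] K) (β : H ≃ₗ[K] H)
    (S : H →ₗ[K] H) : Prop where
  bialg : IsHomBialgebra K mul one comul counit β
  S_left : ∀ h : H,
    TensorProduct.lift mul (TensorProduct.map S LinearMap.id (comul h)) = counit h • one
  S_right : ∀ h : H,
    TensorProduct.lift mul (TensorProduct.map LinearMap.id S (comul h)) = counit h • one
  S_map : ∀ h : H, S (β h) = β (S h)

/-- `(A,▷,α)` is an `(H,β)`-module Hom-algebra. -/
structure IsModuleHomAlgebra
    (Hmul : H →ₗ[K] H →ₗ[K] H) (Hone : H) (Hcomul : H →ₗ[K] H ⊗[K] H)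
    (Hcounit : H →ₗ[K] K) (β : H ≃ₗ[K] H)
    (Amul : A →ₗ[K] A →ₗ[K] A) (Aone : A) (α : A ≃ₗ[K] A)
    (act : H →ₗ[K] A →ₗ[K] A) : Prop where
  act_map : ∀ (h : H) (a : A), α (act h a) = act (β h) (α a)
  act_act : ∀ (h h' : H) (a : A), act (β h) (act h' a) = act (Hmul h h') (α a)
  one_act : ∀ a : A, act Hone a = α a
  act_mul : ∀ (h : H) (a a' : A),
    act (β (β h)) (Amul a a') =
      TensorProduct.lift Amul
        (TensorProduct.map (act.flip a) (act.flip a') (Hcomul h))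
  act_one : ∀ h : H, act h Aone = Hcounit h • Aone

/-- the map `R(h ⊗ a) = (h₁ ▷ a) ⊗ h₂` induced by a module action. -/
def actR (Hcomul : H →ₗ[K] H ⊗[K] H) (act : H →ₗ[K] A →ₗ[K] A) :
    H ⊗[K] A →ₗ[K] A ⊗[K] H :=
  (TensorProduct.map (TensorProduct.lift act) LinearMap.id) ∘ₗ
  (TensorProduct.assoc K H A H).symm.toLinearMap ∘ₗ
  (TensorProduct.map LinearMap.id (TensorProduct.comm K H A).toLinearMap) ∘ₗ
  (TensorProduct.assoc K H H A).toLinearMap ∘ₗ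
  (TensorProduct.map Hcomul LinearMap.id)

/-- `σ` is a Hom-cobraiding form: axioms (CHA1)-(CHA5). -/
structure IsCobraiding (mul : M →ₗ[K] M →ₗ[K] M) (one : M)
    (comul : M →ₗ[K] M ⊗[K] M) (counit : M →ₗ[K] K) (γ : M ≃ₗ[K] M)
    (σ : M →ₗ[K] M →ₗ[K] K) : Prop where
  cha1_left : ∀ x : M, σ x one = counit x
  cha1_right : ∀ x : M, σ one x = counit x
  cha2 : ∀ x y z : M, σ (mul x y) (γ z) = pairT K (σ (γ x)) (σ (γ y)) (comul z)
  cha3 : ∀ x y z : M, σ (γ x) (mul y z) = pairT K (σ.flip (γ z)) (σ.flip (γ y)) (comul x)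
  cha4 : ∀ x y : M,
    ((TensorProduct.lid K M).toLinearMap ∘ₗ
      TensorProduct.map (TensorProduct.lift σ) (TensorProduct.lift mul) ∘ₗ
      (TensorProduct.tensorTensorTensorComm K M M M M).toLinearMap)
        (comul x ⊗ₜ[K] comul y) =
    ((TensorProduct.rid K M).toLinearMap ∘ₗ
      TensorProduct.map (TensorProduct.lift mul.flip) (TensorProduct.lift σ) ∘ₗ
      (TensorProduct.tensorTensorTensorComm K M M M M).toLinearMap)
        (comul x ⊗ₜ[K] comul y)
  cha5 : ∀ x y : M, σ (γ x) (γ y) = σ x y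

/-- `θ` is a Hom-skew pairing: axioms (SP1)-(SP4). -/
structure IsSkewPairing
    (Amul : A →ₗ[K] A →ₗ[K] A) (Aone : A) (Acomul : A →ₗ[K] A ⊗[K] A)
    (Acounit : A →ₗ[K] K) (α : A ≃ₗ[K] A)
    (Bmul : B →ₗ[K] B →ₗ[K] B) (Bone : B) (Bcomul : B →ₗ[K] B ⊗[K] B)
    (Bcounit : B →ₗ[K] K) (β : B ≃ₗ[K] B)
    (θ : A →ₗ[K] B →ₗ[K] K) : Prop where
  sp1_left : ∀ a : A, θ a Bone = Acounit a
  sp1_right : ∀ b : B, θ Aone b = Bcounit b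
  sp2 : ∀ (a a' : A) (b : B),
    θ (Amul a a') (β b) = pairT K (θ (α a)) (θ (α a')) (Bcomul b)
  sp3 : ∀ (a : A) (b b' : B),
    θ (α a) (Bmul b b') = pairT K (θ.flip (β b')) (θ.flip (β b)) (Acomul a)
  sp4 : ∀ (a : A) (b : B), θ (α a) (β b) = θ a b
/-- decomposition of a cobraiding `σ` on an R-smash product Hom-Hopf
algebra: `σ(α(a)⊗β(b), α(a')⊗β(b')) = φ(a₁,b'₁)τ(a₂,a'₁)υ(b₁,b'₂)ψ(b₂,a'₂)`. -/
theorem rsmash_cobraiding_decomposition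
    (mA : A →ₗ[K] A →ₗ[K] A) (oneA : A) (dA : A →ₗ[K] A ⊗[K] A) (eA : A →ₗ[K] K)
    (α : A ≃ₗ[K] A) (SA : A →ₗ[K] A)
    (mB : B →ₗ[K] B →ₗ[K] B) (oneB : B) (dB : B →ₗ[K] B ⊗[K] B) (eB : B →ₗ[K] K)
    (β : B ≃ₗ[K] B) (SB : B →ₗ[K] B)
    (hA : IsHomHopf K mA oneA dA eA α SA) (hB : IsHomHopf K mB oneB dB eB β SB)
    (R : B ⊗[K] A →ₗ[K] A ⊗[K] B)
    (hR : RTwist K α β R) (hc1 : RC1 K oneA oneB α β R)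
    (hc2 : RC2 K mB α β R) (hc3 : RC3 K mA α β R)
    (hRcomul : ∀ (a : A) (b : B),
      tcomul K dA dB (R (b ⊗ₜ[K] a)) =
        TensorProduct.map R R (tcomul K dB dA (b ⊗ₜ[K] a)))
    (hRcounit : ∀ (a : A) (b : B),
      tcounit K eA eB (R (b ⊗ₜ[K] a)) = eA a * eB b)
    (σ : (A ⊗[K] B) →ₗ[K] (A ⊗[K] B) →ₗ[K] K)
    (hσ : IsCobraiding K (smashMul K mA mB α β R) (oneA ⊗ₜ[K] oneB)
      (tcomul K dA dB) (tcounit K eA eB) (TensorProduct.congr α β) σ) :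
    ∀ (a a' : A) (b b' : B),
      σ (α a ⊗ₜ[K] β b) (α a' ⊗ₜ[K] β b') =
        contract4 K
          (contract4 K ((σ ∘ₗ (TensorProduct.mk K A B).flip oneB).compl₂
              (TensorProduct.mk K A B oneA))
            ((σ ∘ₗ (TensorProduct.mk K A B).flip oneB).compl₂
              ((TensorProduct.mk K A B).flip oneB)))
          (contract4 K ((σ ∘ₗ TensorProduct.mk K A B oneA).compl₂
              (TensorProduct.mk K A B oneA))
            ((σ ∘ₗ TensorProduct.mk K A B oneA).compl₂
              ((TensorProduct.mk K A B).flip oneB)))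
          (dA a ⊗ₜ[K] dB b)
          ((TensorProduct.map (TensorProduct.comm K A B).toLinearMap
              (TensorProduct.comm K A B).toLinearMap)
            ((TensorProduct.tensorTensorTensorComm K A A B B) (dA a' ⊗ₜ[K] dB b'))) := by
  intro a a' b b'
  have hα1 : α oneA = oneA := hA.bialg.alg.map_one
  have hβ1 : β oneB = oneB := hB.bialg.alg.map_one
  have hαs1 : α.symm oneA = oneA := by
    conv_lhs => rw [← hα1]
    exact α.symm_apply_apply oneA
  have hβs1 : β.symm oneB = oneB := by
    conv_lhs => rw [← hβ1]
    exact β.symm_apply_apply oneB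
  -- multiplication in the smash product with `oneB` in the left factor
  have mul_left : ∀ (x x' : A) (y' : B),
      smashMul K mA mB α β R (x ⊗ₜ[K] oneB) (x' ⊗ₜ[K] y') = mA x x' ⊗ₜ[K] β y' := by
    intro x x' y'
    simp only [smashMul, TensorProduct.curry_apply, LinearMap.comp_apply,
      TensorProduct.map_tmul, LinearMap.id_apply, LinearEquiv.coe_coe,
      TensorProduct.assoc_tmul, TensorProduct.assoc_symm_tmul]
    rw [hc1.1 (α.symm x')]
    simp only [α.apply_symm_apply, TensorProduct.map_tmul, LinearMap.id_apply,
      LinearEquiv.coe_coe, hβs1, TensorProduct.assoc_tmul, TensorProduct.assoc_symm_tmul,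
      TensorProduct.lift.tmul, hB.bialg.alg.one_mul]
  obtain ⟨sa, hsa⟩ := TensorProduct.exists_finset (dA a)
  obtain ⟨sb, hsb⟩ := TensorProduct.exists_finset (dB b)
  obtain ⟨sa', hsa'⟩ := TensorProduct.exists_finset (dA a')
  obtain ⟨sb', hsb'⟩ := TensorProduct.exists_finset (dB b')
  -- explicit form of the tensor-product comultiplication
  have tc : ∀ (x : A) (y : B) (sx : Finset (A × A)) (sy : Finset (B × B)),
      dA x = ∑ i ∈ sx, i.1 ⊗ₜ[K] i.2 → dB y = ∑ j ∈ sy, j.1 ⊗ₜ[K] j.2 →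
      tcomul K dA dB (x ⊗ₜ[K] y) =
        ∑ i ∈ sx, ∑ j ∈ sy, (i.1 ⊗ₜ[K] j.1) ⊗ₜ[K] (i.2 ⊗ₜ[K] j.2) := by
    intro x y sx sy hx hy
    simp only [tcomul, LinearMap.comp_apply, TensorProduct.map_tmul, hx, hy,
      LinearEquiv.coe_coe, TensorProduct.sum_tmul, TensorProduct.tmul_sum, map_sum,
      TensorProduct.tensorTensorTensorComm_tmul]
    rw [Finset.sum_comm]
  have hcoA : tcomul K dA dB (a ⊗ₜ[K] oneB) =
      ∑ i ∈ sa, (i.1 ⊗ₜ[K] oneB) ⊗ₜ[K] (i.2 ⊗ₜ[K] oneB) := by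
    have := tc a oneB sa {(oneB, oneB)} hsa (by simpa using hB.bialg.comul_one)
    simpa using this
  have hcoB : tcomul K dA dB (oneA ⊗ₜ[K] b) =
      ∑ j ∈ sb, (oneA ⊗ₜ[K] j.1) ⊗ₜ[K] (oneA ⊗ₜ[K] j.2) := by
    have := tc oneA b {(oneA, oneA)} sb (by simpa using hA.bialg.comul_one) hsb
    simpa using this
  -- decomposition of σ(α a ⊗ 1, c ⊗ d)
  have sig_left : ∀ (c : A) (d : B),
      σ (α a ⊗ₜ[K] oneB) (c ⊗ₜ[K] d) =
        ∑ i ∈ sa, σ (i.1 ⊗ₜ[K] oneB) (oneA ⊗ₜ[K] d) * σ (i.2 ⊗ₜ[K] oneB) (c ⊗ₜ[K] oneB) := by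
    intro c d
    have h1 : (α a ⊗ₜ[K] oneB : A ⊗[K] B) = TensorProduct.congr α β (a ⊗ₜ[K] oneB) := by
      simp [hβ1]
    have h2 : (c ⊗ₜ[K] d : A ⊗[K] B) =
        smashMul K mA mB α β R (α.symm c ⊗ₜ[K] oneB) (oneA ⊗ₜ[K] β.symm d) := by
      rw [mul_left, hA.bialg.alg.mul_one, α.apply_symm_apply, β.apply_symm_apply]
    rw [h1, h2, hσ.cha3, hcoA]
    simp [pairT, hα1, hβ1, α.apply_symm_apply, β.apply_symm_apply]
  have sig_right : ∀ (c : A) (d : B),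
      σ (oneA ⊗ₜ[K] β b) (c ⊗ₜ[K] d) =
        ∑ j ∈ sb, σ (oneA ⊗ₜ[K] j.1) (oneA ⊗ₜ[K] d) * σ (oneA ⊗ₜ[K] j.2) (c ⊗ₜ[K] oneB) := by
    intro c d
    have h1 : (oneA ⊗ₜ[K] β b : A ⊗[K] B) = TensorProduct.congr α β (oneA ⊗ₜ[K] b) := by
      simp [hα1]
    have h2 : (c ⊗ₜ[K] d : A ⊗[K] B) =
        smashMul K mA mB α β R (α.symm c ⊗ₜ[K] oneB) (oneA ⊗ₜ[K] β.symm d) := by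
      rw [mul_left, hA.bialg.alg.mul_one, α.apply_symm_apply, β.apply_symm_apply]
    rw [h1, h2, hσ.cha3, hcoB]
    simp [pairT, hα1, hβ1, α.apply_symm_apply, β.apply_symm_apply]
  -- main computation
  have h1 : (α a ⊗ₜ[K] β b : A ⊗[K] B) =
      smashMul K mA mB α β R (a ⊗ₜ[K] oneB) (oneA ⊗ₜ[K] b) := by
    rw [mul_left, hA.bialg.alg.mul_one]
  have h2 : (α a' ⊗ₜ[K] β b' : A ⊗[K] B) = TensorProduct.congr α β (a' ⊗ₜ[K] b') := by
    simp
  rw [h1, h2, hσ.cha2, tc a' b' sa' sb' hsa' hsb']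
  simp only [pairT, LinearMap.comp_apply, map_sum, TensorProduct.map_tmul,
    LinearEquiv.coe_toLinearMap, TensorProduct.lid_tmul, smul_eq_mul,
    TensorProduct.congr_tmul, hα1, hβ1]
  simp only [sig_left, sig_right]
  rw [hsa, hsb, hsa', hsb']
  simp only [contract4, TensorProduct.sum_tmul, TensorProduct.tmul_sum, map_sum,
    LinearMap.sum_apply, TensorProduct.curry_apply, LinearMap.comp_apply,
    LinearEquiv.coe_coe, TensorProduct.tensorTensorTensorComm_tmul,
    TensorProduct.map_tmul, TensorProduct.lift.tmul, TensorProduct.lid_tmul,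
    smul_eq_mul, LinearMap.compl₂_apply, LinearMap.flip_apply, TensorProduct.mk_apply,
    TensorProduct.comm_tmul, LinearEquiv.coe_toLinearMap]
  simp only [Finset.sum_mul, Finset.mul_sum]
  rw [Finset.sum_comm]

end HomPaper
end
end

section
/- If (A♮_R B, α⊗β, σ) is a cobraided R-smash product Hom-Hopf algebra, then the restriction τ(a,a') = σ(a⊗1_B, a'⊗1_B) makes (A,α,τ) a cobraided Hom-Hopf algebra, and similarly υ(b,b')=σ(1_A⊗b,1_A⊗b') makes (B,β,υ) a cobraided Hom-Hopf algebra. -/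
open TensorProduct

noncomputable section

namespace HomPaper

variable (K : Type) [Field K]
variable {A B C D H M : Type}
variable [AddCommGroup A] [Module K A] [AddCommGroup B] [Module K B]
variable [AddCommGroup C] [Module K C] [AddCommGroup D] [Module K D]
variable [AddCommGroup H] [Module K H] [AddCommGroup M] [Module K M]

lemma pairT_tmul' (f : A →ₗ[K] K) (g : B →ₗ[K] K) (a : A) (b : B) :
    pairT K f g (a ⊗ₜ[K] b) = f a * g b := by
  simp [pairT]

/-- Pull back a cobraiding along an embedding of Hom-bialgebra data. -/
lemma cobraiding_pullback
    (mA : A →ₗ[K] A →ₗ[K] A) (oneA : A) (dA : A →ₗ[K] A ⊗[K] A) (eA : A →ₗ[K] K)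
    (α : A ≃ₗ[K] A)
    (mM : M →ₗ[K] M →ₗ[K] M) (oneM : M) (dM : M →ₗ[K] M ⊗[K] M) (eM : M →ₗ[K] K)
    (γ : M ≃ₗ[K] M) (σ : M →ₗ[K] M →ₗ[K] K) (i : A →ₗ[K] M)
    (hinj : Function.Injective i)
    (hmul : ∀ a a', mM (i a) (i a') = i (mA a a'))
    (hone : i oneA = oneM)
    (hcom : ∀ a, dM (i a) = TensorProduct.map i i (dA a))
    (hcou : ∀ a, eM (i a) = eA a)
    (hhom : ∀ a, γ (i a) = i (α a))
    (hσ : IsCobraiding K mM oneM dM eM γ σ) :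
    IsCobraiding K mA oneA dA eA α ((σ ∘ₗ i).compl₂ i) := by
  have hτ : ∀ a a', ((σ ∘ₗ i).compl₂ i) a a' = σ (i a) (i a') := fun _ _ => rfl
  constructor
  · intro x
    rw [hτ, hone, hσ.cha1_left, hcou]
  · intro x
    rw [hτ, hone, hσ.cha1_right, hcou]
  · intro x y z
    rw [hτ, ← hmul, ← hhom, hσ.cha2, hhom, hcom]
    induction (dA z) using TensorProduct.induction_on with
    | zero => simp
    | tmul a b => simp [pairT_tmul', hτ, hhom]
    | add u v hu hv => simp only [map_add, hu, hv]
  · intro x y z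
    rw [hτ, ← hmul, ← hhom, hσ.cha3, hhom, hcom]
    induction (dA x) using TensorProduct.induction_on with
    | zero => simp
    | tmul a b =>
        simp only [TensorProduct.map_tmul, pairT_tmul', LinearMap.flip_apply, hτ, hhom]
    | add u v hu hv => simp only [map_add, hu, hv]
  · intro x y
    apply hinj
    have h := hσ.cha4 (i x) (i y)
    rw [hcom, hcom] at h
    simp only [LinearMap.comp_apply, LinearEquiv.coe_coe] at h ⊢
    have hL : ∀ u v : A ⊗[K] A,
        i ((TensorProduct.lid K A) (TensorProduct.map
            (TensorProduct.lift ((σ ∘ₗ i).compl₂ i)) (TensorProduct.lift mA)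
            ((TensorProduct.tensorTensorTensorComm K A A A A) (u ⊗ₜ[K] v)))) =
        (TensorProduct.lid K M) (TensorProduct.map
            (TensorProduct.lift σ) (TensorProduct.lift mM)
            ((TensorProduct.tensorTensorTensorComm K M M M M)
              (TensorProduct.map i i u ⊗ₜ[K] TensorProduct.map i i v))) := by
      intro u v
      induction u using TensorProduct.induction_on with
      | zero => simp
      | tmul a b =>
          induction v using TensorProduct.induction_on with
          | zero => simp
          | tmul c d => simp [hτ, ← hmul, TensorProduct.smul_tmul']
          | add p q hp hq =>
              simp only [TensorProduct.tmul_add, map_add, hp, hq]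
      | add p q hp hq =>
          simp only [TensorProduct.add_tmul, map_add, hp, hq]
    have hR : ∀ u v : A ⊗[K] A,
        i ((TensorProduct.rid K A) (TensorProduct.map
            (TensorProduct.lift mA.flip) (TensorProduct.lift ((σ ∘ₗ i).compl₂ i))
            ((TensorProduct.tensorTensorTensorComm K A A A A) (u ⊗ₜ[K] v)))) =
        (TensorProduct.rid K M) (TensorProduct.map
            (TensorProduct.lift mM.flip) (TensorProduct.lift σ)
            ((TensorProduct.tensorTensorTensorComm K M M M M)
              (TensorProduct.map i i u ⊗ₜ[K] TensorProduct.map i i v))) := by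
      intro u v
      induction u using TensorProduct.induction_on with
      | zero => simp
      | tmul a b =>
          induction v using TensorProduct.induction_on with
          | zero => simp
          | tmul c d => simp [hτ, ← hmul, TensorProduct.tmul_smul]
          | add p q hp hq =>
              simp only [TensorProduct.tmul_add, map_add, hp, hq]
      | add p q hp hq =>
          simp only [TensorProduct.add_tmul, map_add, hp, hq]
    rw [hL, hR, h]
  · intro x y
    rw [hτ, hτ, ← hhom, ← hhom, hσ.cha5]

/-- the restrictions `τ = σ∘(i⊗i)` and `υ = σ∘(j⊗j)` of a cobraiding on an
R-smash product are cobraidings on `(A,α)` and `(B,β)` respectively. -/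
theorem rsmash_cobraiding_restrictions
    (mA : A →ₗ[K] A →ₗ[K] A) (oneA : A) (dA : A →ₗ[K] A ⊗[K] A) (eA : A →ₗ[K] K)
    (α : A ≃ₗ[K] A) (SA : A →ₗ[K] A)
    (mB : B →ₗ[K] B →ₗ[K] B) (oneB : B) (dB : B →ₗ[K] B ⊗[K] B) (eB : B →ₗ[K] K)
    (β : B ≃ₗ[K] B) (SB : B →ₗ[K] B)
    (hA : IsHomHopf K mA oneA dA eA α SA) (hB : IsHomHopf K mB oneB dB eB β SB)
    (R : B ⊗[K] A →ₗ[K] A ⊗[K] B)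
    (hR : RTwist K α β R) (hc1 : RC1 K oneA oneB α β R)
    (hc2 : RC2 K mB α β R) (hc3 : RC3 K mA α β R)
    (hRcomul : ∀ (a : A) (b : B),
      tcomul K dA dB (R (b ⊗ₜ[K] a)) =
        TensorProduct.map R R (tcomul K dB dA (b ⊗ₜ[K] a)))
    (hRcounit : ∀ (a : A) (b : B),
      tcounit K eA eB (R (b ⊗ₜ[K] a)) = eA a * eB b)
    (σ : (A ⊗[K] B) →ₗ[K] (A ⊗[K] B) →ₗ[K] K)
    (hσ : IsCobraiding K (smashMul K mA mB α β R) (oneA ⊗ₜ[K] oneB)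
      (tcomul K dA dB) (tcounit K eA eB) (TensorProduct.congr α β) σ) :
    IsCobraiding K mA oneA dA eA α
      ((σ ∘ₗ (TensorProduct.mk K A B).flip oneB).compl₂
        ((TensorProduct.mk K A B).flip oneB)) ∧
    IsCobraiding K mB oneB dB eB β
      ((σ ∘ₗ TensorProduct.mk K A B oneA).compl₂ (TensorProduct.mk K A B oneA))  := by
  have hαone : α oneA = oneA := hA.bialg.alg.map_one
  have hβone : β oneB = oneB := hB.bialg.alg.map_one
  have hαsone : α.symm oneA = oneA := by rw [← hαone, α.symm_apply_apply, hαone]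
  have hβsone : β.symm oneB = oneB := by rw [← hβone, β.symm_apply_apply, hβone]
  have heAone : eA oneA = 1 := hA.bialg.counit_one
  have heBone : eB oneB = 1 := hB.bialg.counit_one
  have hmBone : mB oneB oneB = oneB := by rw [hB.bialg.alg.mul_one, hβone]
  have hmAone : mA oneA oneA = oneA := by rw [hA.bialg.alg.mul_one, hαone]
  constructor
  · -- A side
    apply cobraiding_pullback K mA oneA dA eA α
      (smashMul K mA mB α β R) (oneA ⊗ₜ[K] oneB) (tcomul K dA dB) (tcounit K eA eB)
      (TensorProduct.congr α β) σ ((TensorProduct.mk K A B).flip oneB)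
    · intro a a' h
      have h2 := congrArg (fun t => (TensorProduct.rid K A)
        (TensorProduct.map LinearMap.id eB t)) h
      simpa [heBone] using h2
    · intro a a'
      simp only [LinearMap.flip_apply, TensorProduct.mk_apply]
      simp [smashMul, (hc1.1 (α.symm a')), α.apply_symm_apply, hβsone, hmBone,
        hA.bialg.alg.map_mul]
    · rfl
    · intro a
      simp only [LinearMap.flip_apply, TensorProduct.mk_apply, tcomul,
        LinearMap.comp_apply, TensorProduct.map_tmul, hB.bialg.comul_one,
        LinearEquiv.coe_coe]
      induction (dA a) using TensorProduct.induction_on with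
      | zero => simp
      | tmul x y => simp
      | add u v hu hv => simp only [TensorProduct.add_tmul, map_add, hu, hv]
    · intro a
      simp [tcounit, pairT_tmul', heBone]
    · intro a
      simp [hβone]
    · exact hσ
  · -- B side
    apply cobraiding_pullback K mB oneB dB eB β
      (smashMul K mA mB α β R) (oneA ⊗ₜ[K] oneB) (tcomul K dA dB) (tcounit K eA eB)
      (TensorProduct.congr α β) σ (TensorProduct.mk K A B oneA)
    · intro b b' h
      have h2 := congrArg (fun t => (TensorProduct.lid K B)
        (TensorProduct.map eA LinearMap.id t)) h
      simpa [heAone] using h2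
    · intro b b'
      simp only [TensorProduct.mk_apply]
      simp [smashMul, hαsone, (hc1.2 b), hmAone, hB.bialg.alg.map_mul]
    · rfl
    · intro b
      simp only [TensorProduct.mk_apply, tcomul, LinearMap.comp_apply,
        TensorProduct.map_tmul, hA.bialg.comul_one, LinearEquiv.coe_coe]
      induction (dB b) using TensorProduct.induction_on with
      | zero => simp
      | tmul x y => simp
      | add u v hu hv => simp only [TensorProduct.tmul_add, map_add, hu, hv]
    · intro b
      simp [tcounit, pairT_tmul', heAone]
    · intro b
      simp [hαone]
    · exact hσ


end HomPaper
end
end
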